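/- arXiv:2311.05913 — 4 statements merged into one kernel-verified Lean document; each statement's English description precedes it below -/
import Mathlib

section
/- If G has a connected embedding of depth d into H, and H has a connected embedding of depth d' into K, then G has a connected embedding of depth at most d·d' into K, obtained by mapping each vertex v of G to the union of the images of the vertices in Ψ(v). -/
open Finset

/-- Two subgraphs (given by vertex sets) of `H` touch if they share a vertex or are
joined by an edge of `H`. -/
def Touches {V : Type*} (H : SimpleGraph V) (S T : Set V) : Prop :=
  (S ∩ T).Nonempty ∨ ∃ a ∈ S, ∃ b ∈ T, H.Adj a b

/-- `Ψ` is a connected embedding of `G` into `H`: each image is nonempty and induces a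
connected subgraph of `H`, and images of adjacent vertices touch. -/
def IsConnEmbedding {V X : Type*} (G : SimpleGraph V) (H : SimpleGraph X)
    (Ψ : V → Finset X) : Prop :=
  (∀ v, (Ψ v).Nonempty) ∧ (∀ v, (H.induce (Ψ v : Set X)).Connected) ∧
  (∀ u v, G.Adj u v → Touches H (Ψ u) (Ψ v))

/-- The embedding `Ψ` has depth at most `d`: every vertex of the host graph lies in at
most `d` of the sets `Ψ v`. -/
def DepthLE {V X : Type*} [Fintype V] [DecidableEq X] (Ψ : V → Finset X) (d : ℕ) : Prop :=
  ∀ x : X, (Finset.univ.filter (fun v => x ∈ Ψ v)).card ≤ d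

/-! Blowing each vertex `x` of `H` up to the connected set `Ψ' x` keeps connected sets connected,
because adjacent vertices of `H` are blown up to touching sets; and a vertex `y` of `K` lies in
at most `d'` sets `Ψ' x`, each of which lies in at most `d` sets `Ψ v`. -/

namespace Touches

variable {X Y : Type*}

theorem mono {K : SimpleGraph Y} {S S' T T' : Set Y} (h : Touches K S T) (hS : S ⊆ S')
    (hT : T ⊆ T') : Touches K S' T' :=
  h.imp (fun h => h.mono (Set.inter_subset_inter hS hT))
    fun ⟨a, ha, b, hb, hab⟩ => ⟨a, hS ha, b, hT hb, hab⟩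

theorem induce_union_connected {K : SimpleGraph Y} {S T : Set Y} (h : Touches K S T)
    (hS : (K.induce S).Preconnected) (hT : (K.induce T).Preconnected) :
    (K.induce (S ∪ T)).Connected :=
  h.elim (SimpleGraph.induce_union_connected hS hT)
    fun ⟨_, ha, _, hb, hab⟩ => SimpleGraph.connected_induce_union hS hT ha hb hab

theorem biUnion {H : SimpleGraph X} {K : SimpleGraph Y} {S T : Set X} {f : X → Set Y}
    (h : Touches H S T) (hf : ∀ x, (f x).Nonempty)
    (hadj : ∀ x y, H.Adj x y → Touches K (f x) (f y)) :
    Touches K (⋃ x ∈ S, f x) (⋃ y ∈ T, f y) := by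
  rcases h with ⟨x, hxS, hxT⟩ | ⟨x, hx, y, hy, hxy⟩
  · obtain ⟨a, ha⟩ := hf x
    exact Or.inl ⟨a, Set.mem_biUnion hxS ha, Set.mem_biUnion hxT ha⟩
  · exact (hadj x y hxy).mono (Set.subset_biUnion_of_mem hx) (Set.subset_biUnion_of_mem hy)

end Touches

namespace SimpleGraph

variable {X Y : Type*}

theorem Preconnected.reachable_induce_of_subset {K : SimpleGraph Y} {S T : Set Y} (hST : S ⊆ T)
    (hS : (K.induce S).Preconnected) {a b : Y} (ha : a ∈ S) (hb : b ∈ S) :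
    (K.induce T).Reachable ⟨a, hST ha⟩ ⟨b, hST hb⟩ :=
  (hS ⟨a, ha⟩ ⟨b, hb⟩).map (K.induceHomOfLE hST).toHom

theorem induce_biUnion_connected {H : SimpleGraph X} {K : SimpleGraph Y} {s : Set X}
    {f : X → Set Y} (hs : (H.induce s).Connected) (hf : ∀ x ∈ s, (K.induce (f x)).Connected)
    (hadj : ∀ x ∈ s, ∀ y ∈ s, H.Adj x y → Touches K (f x) (f y)) :
    (K.induce (⋃ x ∈ s, f x)).Connected := by
  set T := ⋃ x ∈ s, f x
  have hsub : ∀ {x}, x ∈ s → f x ⊆ T := fun hx => Set.subset_biUnion_of_mem hx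
  have reachable_of_walk : ∀ (x y : s), (H.induce s).Walk x y →
      ∀ a (ha : a ∈ f x) b (hb : b ∈ f y),
        (K.induce T).Reachable ⟨a, hsub x.2 ha⟩ ⟨b, hsub y.2 hb⟩ := by
    intro x y w
    induction w with
    | @nil x =>
      exact fun a ha b hb => (hf x x.2).preconnected.reachable_induce_of_subset (hsub x.2) ha hb
    | @cons x z y hxz _ ih =>
      intro a ha b hb
      obtain ⟨c, hc⟩ := (hf z z.2).nonempty
      have hxz_conn := (hadj x x.2 z z.2 hxz).induce_union_connected
        (hf x x.2).preconnected (hf z z.2).preconnected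
      exact (hxz_conn.preconnected.reachable_induce_of_subset
        (Set.union_subset (hsub x.2) (hsub z.2)) (Or.inl ha) (Or.inr hc)).trans (ih c hc b hb)
  rw [connected_iff]
  constructor
  · rintro ⟨a, ha⟩ ⟨b, hb⟩
    obtain ⟨x, hx, hax⟩ := Set.mem_iUnion₂.mp ha
    obtain ⟨y, hy, hby⟩ := Set.mem_iUnion₂.mp hb
    obtain ⟨w⟩ := hs.preconnected ⟨x, hx⟩ ⟨y, hy⟩
    exact reachable_of_walk _ _ w a hax b hby
  · obtain ⟨⟨x, hx⟩⟩ := hs.nonempty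
    obtain ⟨⟨a, ha⟩⟩ := (hf x hx).nonempty
    exact ⟨⟨a, hsub hx ha⟩⟩

end SimpleGraph

section Composition

variable {V X Y : Type*} [DecidableEq Y]

theorem IsConnEmbedding.comp {G : SimpleGraph V} {H : SimpleGraph X} {K : SimpleGraph Y}
    {Ψ : V → Finset X} {Ψ' : X → Finset Y} (h : IsConnEmbedding G H Ψ)
    (h' : IsConnEmbedding H K Ψ') : IsConnEmbedding G K (fun v => (Ψ v).biUnion Ψ') := by
  refine ⟨fun v => (h.1 v).biUnion fun x _ => h'.1 x, fun v => ?_, fun u v huv => ?_⟩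
  · rw [Finset.coe_biUnion]
    exact SimpleGraph.induce_biUnion_connected (h.2.1 v) (fun x _ => h'.2.1 x)
      fun x _ y _ => h'.2.2 x y
  · simp only [Finset.coe_biUnion]
    exact (h.2.2 u v huv).biUnion (fun x => h'.1 x) h'.2.2

theorem DepthLE.comp [Fintype V] [Fintype X] [DecidableEq X] {Ψ : V → Finset X}
    {Ψ' : X → Finset Y} {d d' : ℕ} (hd : DepthLE Ψ d) (hd' : DepthLE Ψ' d') :
    DepthLE (fun v => (Ψ v).biUnion Ψ') (d * d') := by
  classical
  intro y
  have hsub : ({v | y ∈ (Ψ v).biUnion Ψ'} : Finset V) ⊆ ({x | y ∈ Ψ' x} : Finset X).biUnion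
      fun x => {v | x ∈ Ψ v} := by
    intro v hv
    simp only [Finset.mem_filter, Finset.mem_biUnion, Finset.mem_univ, true_and] at hv ⊢
    obtain ⟨x, hx, hy⟩ := hv
    exact ⟨x, hy, hx⟩
  calc #{v | y ∈ (Ψ v).biUnion Ψ'}
      ≤ #({x | y ∈ Ψ' x} : Finset X) * d :=
        (Finset.card_le_card hsub).trans (Finset.card_biUnion_le_card_mul _ _ _ fun x _ => hd x)
    _ ≤ d * d' := (Nat.mul_le_mul_right d (hd' y)).trans_eq (mul_comm d' d)

end Composition

/-- Composition of connected embeddings: if `G` embeds into `H` with depth `d` and `H`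
embeds into `K` with depth `d'`, then `v ↦ ⋃_{u ∈ Ψ(v)} Ψ'(u)` is a connected embedding
of `G` into `K` of depth at most `d · d'`. -/
theorem stmt_10 {V X Y : Type*} [Fintype V] [Fintype X] [DecidableEq X] [DecidableEq Y]
    (G : SimpleGraph V) (H : SimpleGraph X) (K : SimpleGraph Y)
    (Ψ : V → Finset X) (Ψ' : X → Finset Y) (d d' : ℕ)
    (h1 : IsConnEmbedding G H Ψ) (h2 : IsConnEmbedding H K Ψ')
    (hd : DepthLE Ψ d) (hd' : DepthLE Ψ' d') :
    IsConnEmbedding G K (fun v => (Ψ v).biUnion Ψ') ∧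
      DepthLE (fun v => (Ψ v).biUnion Ψ') (d * d') := by
  exact ⟨h1.comp h2, hd.comp hd'⟩
end

section
/- (Completeness of the CSP embedding reduction) Let Γ be a 2-CSP with constraint graph G(V,E) and alphabet Σ, let H(X,F) be a simple graph with no isolated vertices, let Ψ : V → P(X) be a connected embedding of G into H of depth d, and let Φ be the 2-CSP with constraint graph H and alphabet Σ^d defined by the vertex-consistency and edge-consistency constraints induced by Ψ. If Γ has a satisfying assignment σ, then the assignment x ↦ (σ(π_x⁻¹(i)) for i ≤ d_x, arbitrary otherwise) satisfies Φ. -/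
open Finset

/-- `Vx Ψ x` is the set of variables `v` with `x ∈ Ψ v`. -/
def Vx {V X : Type*} [Fintype V] [DecidableEq X] (Ψ : V → Finset X) (x : X) : Finset V :=
  Finset.univ.filter (fun v => x ∈ Ψ v)

/-- The constraint `C̃_{xy}` of the reduced CSP `Φ` on values `a, b : Fin d → A`:
vertex consistency on `V_x ∩ V_y` and edge consistency for edges between `V_x` and `V_y`,
inside `V_x`, and inside `V_y`. -/
def Ctilde {V X A : Type*} [Fintype V] [DecidableEq X]
    (G : SimpleGraph V) (C : V → V → Set (A × A)) (Ψ : V → Finset X) {d : ℕ}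
    (π : X → V → Fin d) (x y : X) (a b : Fin d → A) : Prop :=
  (∀ v, x ∈ Ψ v → y ∈ Ψ v → a (π x v) = b (π y v)) ∧
  (∀ u v, G.Adj u v → x ∈ Ψ u → y ∈ Ψ v → (a (π x u), b (π y v)) ∈ C u v) ∧
  (∀ u u', G.Adj u u' → x ∈ Ψ u → x ∈ Ψ u' → (a (π x u), a (π x u')) ∈ C u u') ∧
  (∀ v v', G.Adj v v' → y ∈ Ψ v → y ∈ Ψ v' → (b (π y v), b (π y v')) ∈ C v v')

section Completeness

variable {V X A : Type*}
  {G : SimpleGraph V} {C : V → V → Set (A × A)} {Ψ : V → Finset X} {d : ℕ} {π : X → V → Fin d}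
  {σ : V → A}

def EncodesAt (Ψ : V → Finset X) (π : X → V → Fin d) (σ : V → A) (x : X) (a : Fin d → A) :
    Prop :=
  ∀ v, x ∈ Ψ v → a (π x v) = σ v

theorem ctilde_of_encodesAt [Fintype V] [DecidableEq X]
    (hσ : ∀ u v, G.Adj u v → (σ u, σ v) ∈ C u v) {x y : X} {a b : Fin d → A}
    (ha : EncodesAt Ψ π σ x a) (hb : EncodesAt Ψ π σ y b) :
    Ctilde G C Ψ π x y a b :=
  ⟨fun v hx hy => (ha v hx).trans (hb v hy).symm,
    fun u v huv hx hy => ha u hx ▸ hb v hy ▸ hσ u v huv,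
    fun u u' huu hx hx' => ha u hx ▸ ha u' hx' ▸ hσ u u' huu,
    fun v v' hvv hy hy' => hb v hy ▸ hb v' hy' ▸ hσ v v' hvv⟩

theorem encodesAt_pad {ρ : X → Fin d → V} (hπρ : ∀ x v, x ∈ Ψ v → ρ x (π x v) = v)
    {n : X → ℕ} (hπlt : ∀ x v, x ∈ Ψ v → (π x v).val < n x) (α : A) (x : X) :
    EncodesAt Ψ π σ x (fun i => if i.val < n x then σ (ρ x i) else α) := fun v hx => by
  simp only [if_pos (hπlt x v hx), hπρ x v hx]

end Completeness

theorem stmt_15_general {V X A : Type*} [Fintype V] [DecidableEq X]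
    (G : SimpleGraph V) (H : SimpleGraph X)
    (C : V → V → Set (A × A))
    (Ψ : V → Finset X) (d : ℕ)
    (π : X → V → Fin d) (ρ : X → Fin d → V)
    (hπρ : ∀ x v, x ∈ Ψ v → ρ x (π x v) = v)
    (hπlt : ∀ x v, x ∈ Ψ v → (π x v).val < (Vx Ψ x).card)
    (σ : V → A) (hσ : ∀ u v, G.Adj u v → (σ u, σ v) ∈ C u v)
    (α : A) (σ' : X → Fin d → A)
    (hσ' : σ' = fun x i => if i.val < (Vx Ψ x).card then σ (ρ x i) else α) :
    ∀ x y, H.Adj x y → Ctilde G C Ψ π x y (σ' x) (σ' y) := by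
  rintro x y -
  subst hσ'
  exact ctilde_of_encodesAt hσ (encodesAt_pad hπρ hπlt α x) (encodesAt_pad hπρ hπlt α y)

/-- Completeness of the CSP embedding reduction: if `σ` satisfies `Γ`, then the padded
assignment `x ↦ (i ↦ σ(π_x⁻¹ i)` for `i < d_x`, `α` otherwise`)` satisfies every
constraint of `Φ`. Here `π x` (with partial inverse `ρ x`) plays the role of the
bijection `π_x : V_x → {1,…,d_x}`, and `Ψ` is a connected embedding of depth at most
`d`. -/
theorem stmt_15 {V X A : Type*} [Fintype V] [Fintype X] [DecidableEq V] [DecidableEq X]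
    (G : SimpleGraph V) (H : SimpleGraph X)
    (C : V → V → Set (A × A))
    (Ψ : V → Finset X) (d : ℕ)
    (hne : ∀ v, (Ψ v).Nonempty)
    (hconn : ∀ v, (H.induce (Ψ v : Set X)).Connected)
    (htouch : ∀ u v, G.Adj u v →
      ((↑(Ψ u) ∩ ↑(Ψ v) : Set X).Nonempty ∨ ∃ a ∈ Ψ u, ∃ b ∈ Ψ v, H.Adj a b))
    (hdepth : ∀ x, (Vx Ψ x).card ≤ d)
    (π : X → V → Fin d) (ρ : X → Fin d → V)
    (hπρ : ∀ x v, x ∈ Ψ v → ρ x (π x v) = v)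
    (hπlt : ∀ x v, x ∈ Ψ v → (π x v).val < (Vx Ψ x).card)
    (hρ : ∀ x (i : Fin d), i.val < (Vx Ψ x).card → x ∈ Ψ (ρ x i) ∧ π x (ρ x i) = i)
    (σ : V → A) (hσ : ∀ u v, G.Adj u v → (σ u, σ v) ∈ C u v)
    (α : A) (σ' : X → Fin d → A)
    (hσ' : σ' = fun x i => if i.val < (Vx Ψ x).card then σ (ρ x i) else α) :
    ∀ x y, H.Adj x y → Ctilde G C Ψ π x y (σ' x) (σ' y) :=
  stmt_15_general G H C Ψ d π ρ hπρ hπlt σ hσ α σ' hσ'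
end

section
/- (Soundness of the CSP embedding reduction) With the setup of the CSP embedding reduction, if σ̃ : X → Σ^d is a satisfying assignment of Φ, then for every v ∈ V the value σ̃(x)_{π_x(v)} is the same for all x ∈ Ψ(v), and the assignment σ(v) := σ̃(x)_{π_x(v)} (for any x ∈ Ψ(v)) is a satisfying assignment of Γ. -/
theorem SimpleGraph.Preconnected.induce_eq_of_adj {X B : Type*} {H : SimpleGraph X}
    {s : Set X} (hs : (H.induce s).Preconnected) {f : X → B}
    (hf : ∀ x ∈ s, ∀ y ∈ s, H.Adj x y → f x = f y) {x y : X} (hx : x ∈ s) (hy : y ∈ s) :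
    f x = f y := by
  suffices h : ∀ a b : s, (H.induce s).Reachable a b → f a = f b from
    h ⟨x, hx⟩ ⟨y, hy⟩ (hs _ _)
  rintro a b ⟨p⟩
  induction p with
  | nil => rfl
  | cons hadj _ ih => exact (hf _ (Subtype.prop _) _ (Subtype.prop _) hadj).trans ih

section Soundness

variable {V X A : Type*} [Fintype V] [DecidableEq X] {G : SimpleGraph V} {H : SimpleGraph X}
  {C : V → V → Set (A × A)} {Ψ : V → Finset X} {d : ℕ} {π : X → V → Fin d}
  {σ' : X → Fin d → A}

theorem apply_eq_of_forall_ctilde (hconn : ∀ v, (H.induce (Ψ v : Set X)).Connected)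
    (hσ' : ∀ x y, H.Adj x y → Ctilde G C Ψ π x y (σ' x) (σ' y))
    (v : V) {x x' : X} (hx : x ∈ Ψ v) (hx' : x' ∈ Ψ v) :
    σ' x (π x v) = σ' x' (π x' v) :=
  (hconn v).preconnected.induce_eq_of_adj (f := fun z => σ' z (π z v))
    (fun _ hz _ hw hzw => (hσ' _ _ hzw).1 v hz hw) hx hx'

theorem mem_of_forall_ctilde (hiso : ∀ x : X, ∃ y, H.Adj x y)
    (hconn : ∀ v, (H.induce (Ψ v : Set X)).Connected)
    (htouch : ∀ u v, G.Adj u v →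
      ((↑(Ψ u) ∩ ↑(Ψ v) : Set X).Nonempty ∨ ∃ a ∈ Ψ u, ∃ b ∈ Ψ v, H.Adj a b))
    (hσ' : ∀ x y, H.Adj x y → Ctilde G C Ψ π x y (σ' x) (σ' y))
    {u v : V} (huv : G.Adj u v) {x y : X} (hx : x ∈ Ψ u) (hy : y ∈ Ψ v) :
    (σ' x (π x u), σ' y (π y v)) ∈ C u v := by
  have hcons := apply_eq_of_forall_ctilde hconn hσ'
  rcases htouch u v huv with ⟨z, hzu, hzv⟩ | ⟨a, ha, b, hb, hab⟩
  · obtain ⟨w, hzw⟩ := hiso z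
    obtain ⟨-, -, hinside, -⟩ := hσ' z w hzw
    rw [hcons u hx hzu, hcons v hy hzv]
    exact hinside u v huv hzu hzv
  · obtain ⟨-, hbetween, -, -⟩ := hσ' a b hab
    rw [hcons u hx ha, hcons v hy hb]
    exact hbetween u v huv ha hb

end Soundness

theorem stmt_16_general {V X A : Type*} [Fintype V] [DecidableEq X]
    (G : SimpleGraph V) (H : SimpleGraph X)
    (C : V → V → Set (A × A))
    (Ψ : V → Finset X) (d : ℕ)
    (hiso : ∀ x : X, ∃ y, H.Adj x y)
    (hconn : ∀ v, (H.induce (Ψ v : Set X)).Connected)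
    (htouch : ∀ u v, G.Adj u v →
      ((↑(Ψ u) ∩ ↑(Ψ v) : Set X).Nonempty ∨ ∃ a ∈ Ψ u, ∃ b ∈ Ψ v, H.Adj a b))
    (π : X → V → Fin d)
    (σ' : X → Fin d → A)
    (hσ' : ∀ x y, H.Adj x y → Ctilde G C Ψ π x y (σ' x) (σ' y)) :
    (∀ v, ∀ x ∈ Ψ v, ∀ x' ∈ Ψ v, σ' x (π x v) = σ' x' (π x' v)) ∧
    (∀ u v, G.Adj u v → ∀ x ∈ Ψ u, ∀ y ∈ Ψ v,
      (σ' x (π x u), σ' y (π y v)) ∈ C u v) :=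
  ⟨fun v _ hx _ hx' => apply_eq_of_forall_ctilde hconn hσ' v hx hx',
    fun _ _ huv _ hx _ hy => mem_of_forall_ctilde hiso hconn htouch hσ' huv hx hy⟩

/-- Soundness of the CSP embedding reduction: if `σ'` satisfies `Φ` (with `H` simple
without isolated vertices and `Ψ` a connected embedding of depth at most `d`), then for
every variable `v` the value `σ'(x)_{π_x(v)}` is the same for every `x ∈ Ψ v`, and the
resulting assignment `σ(v) := σ'(x)_{π_x(v)}` satisfies every constraint of `Γ`. -/
theorem stmt_16 {V X A : Type*} [Fintype V] [Fintype X] [DecidableEq V] [DecidableEq X]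
    (G : SimpleGraph V) (H : SimpleGraph X)
    (C : V → V → Set (A × A))
    (Ψ : V → Finset X) (d : ℕ)
    (hiso : ∀ x : X, ∃ y, H.Adj x y)
    (hne : ∀ v, (Ψ v).Nonempty)
    (hconn : ∀ v, (H.induce (Ψ v : Set X)).Connected)
    (htouch : ∀ u v, G.Adj u v →
      ((↑(Ψ u) ∩ ↑(Ψ v) : Set X).Nonempty ∨ ∃ a ∈ Ψ u, ∃ b ∈ Ψ v, H.Adj a b))
    (hdepth : ∀ x, (Vx Ψ x).card ≤ d)
    (π : X → V → Fin d)
    (hπinj : ∀ x, Set.InjOn (π x) {v | x ∈ Ψ v})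
    (σ' : X → Fin d → A)
    (hσ' : ∀ x y, H.Adj x y → Ctilde G C Ψ π x y (σ' x) (σ' y)) :
    (∀ v, ∀ x ∈ Ψ v, ∀ x' ∈ Ψ v, σ' x (π x v) = σ' x' (π x' v)) ∧
    (∀ u v, G.Adj u v → ∀ x ∈ Ψ u, ∀ y ∈ Ψ v,
      (σ' x (π x u), σ' y (π y v)) ∈ C u v) :=
  stmt_16_general G H C Ψ d hiso hconn htouch π σ' hσ'
end

section
/- Let Γ be a 2-CSP with constraint graph G, and let Φ be the 2-CSP obtained from Γ via a connected embedding Ψ of G into H of depth d using the vertex-consistency/edge-consistency construction (H simple, no isolated vertices). Then there is a bijection between satisfying assignments of Γ and satisfying assignments σ̃ of Φ that additionally satisfy σ̃(x)_i = α for all x ∈ X and d_x < i ≤ d, where α ∈ Σ is a fixed padding symbol. -/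
open Finset

/-!
An assignment `σ` of `Γ` is encoded by writing, in the block of each `x`, the values of the
variables of `V_x` in the order `π_x`, padded with `α`. Conversely `σ(v)` is read off the block
of any `x ∈ Ψ v`: vertex consistency along the edges of the connected set `Ψ v` makes this
independent of `x`. A constraint `C_{uv}` of `Γ` is then recovered from edge consistency, either
across an edge of `H` between `Ψ u` and `Ψ v`, or inside a block `x ∈ Ψ u ∩ Ψ v`, which lies on
some edge of `H` because `H` has no isolated vertices.
-/

theorem SimpleGraph.Reachable.apply_eq_of_adj {V β : Type*} {G : SimpleGraph V} {f : V → β}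
    (hf : ∀ u v, G.Adj u v → f u = f v) {u v : V} (h : G.Reachable u v) : f u = f v := by
  rw [SimpleGraph.reachable_iff_reflTransGen] at h
  induction h with
  | refl => rfl
  | tail _ hadj ih => exact ih.trans (hf _ _ hadj)

namespace CSPEmbedding

variable {V X A : Type*}

def Satisfies (G : SimpleGraph V) (C : V → V → Set (A × A)) (σ : V → A) : Prop :=
  ∀ u v, G.Adj u v → (σ u, σ v) ∈ C u v

variable [Fintype V] [DecidableEq X] {d : ℕ}

def reducedConstraint (G : SimpleGraph V) (C : V → V → Set (A × A)) (Ψ : V → Finset X)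
    (π : X → V → Fin d) (x y : X) : Set ((Fin d → A) × (Fin d → A)) :=
  {p | Ctilde G C Ψ π x y p.1 p.2}

def IsPadded (Ψ : V → Finset X) (α : A) (σ' : X → Fin d → A) : Prop :=
  ∀ x (i : Fin d), (Vx Ψ x).card ≤ i.val → σ' x i = α

def encode (Ψ : V → Finset X) (ρ : X → Fin d → V) (α : A) (σ : V → A) (x : X) (i : Fin d) : A :=
  if i.val < (Vx Ψ x).card then σ (ρ x i) else α

def decode (π : X → V → Fin d) (c : V → X) (σ' : X → Fin d → A) (v : V) : A :=
  σ' (c v) (π (c v) v)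

variable {G : SimpleGraph V} {H : SimpleGraph X} {C : V → V → Set (A × A)} {Ψ : V → Finset X}
  {π : X → V → Fin d} {ρ : X → Fin d → V} {c : V → X} {α : A}

theorem encode_apply_of_mem (hπρ : ∀ x v, x ∈ Ψ v → ρ x (π x v) = v)
    (hπlt : ∀ x v, x ∈ Ψ v → (π x v).val < (Vx Ψ x).card) (σ : V → A) ⦃x : X⦄ ⦃v : V⦄
    (hx : x ∈ Ψ v) : encode Ψ ρ α σ x (π x v) = σ v := by
  rw [encode, if_pos (hπlt x v hx), hπρ x v hx]

theorem isPadded_encode (σ : V → A) : IsPadded Ψ α (encode Ψ ρ α σ) :=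
  fun _ _ hi => if_neg (Nat.not_lt.mpr hi)

theorem satisfies_encode (hπρ : ∀ x v, x ∈ Ψ v → ρ x (π x v) = v)
    (hπlt : ∀ x v, x ∈ Ψ v → (π x v).val < (Vx Ψ x).card) {σ : V → A} (hσ : Satisfies G C σ) :
    Satisfies H (reducedConstraint G C Ψ π) (encode Ψ ρ α σ) := by
  intro x y _
  show Ctilde G C Ψ π x y (encode Ψ ρ α σ x) (encode Ψ ρ α σ y)
  have h := encode_apply_of_mem (α := α) hπρ hπlt σ
  refine ⟨fun v hx hy => ?_, fun u v huv hu hv => ?_, fun u v huv hu hv => ?_,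
    fun u v huv hu hv => ?_⟩
  · rw [h hx, h hy]
  all_goals rw [h hu, h hv]; exact hσ u v huv

theorem decode_encode (hc : ∀ v, c v ∈ Ψ v) (hπρ : ∀ x v, x ∈ Ψ v → ρ x (π x v) = v)
    (hπlt : ∀ x v, x ∈ Ψ v → (π x v).val < (Vx Ψ x).card) (σ : V → A) :
    decode π c (encode Ψ ρ α σ) = σ :=
  funext fun v => encode_apply_of_mem hπρ hπlt σ (hc v)

theorem decode_eq (hc : ∀ v, c v ∈ Ψ v) (hconn : ∀ v, (H.induce (Ψ v : Set X)).Connected)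
    {σ' : X → Fin d → A} (hσ' : Satisfies H (reducedConstraint G C Ψ π) σ') {x : X} {v : V}
    (hx : x ∈ Ψ v) : decode π c σ' v = σ' x (π x v) :=
  ((hconn v).preconnected ⟨c v, hc v⟩ ⟨x, hx⟩).apply_eq_of_adj
    (f := fun y : (Ψ v : Set X) => σ' y (π y v)) fun y z hyz => (hσ' y z hyz).1 v y.2 z.2

theorem satisfies_decode (hc : ∀ v, c v ∈ Ψ v) (hconn : ∀ v, (H.induce (Ψ v : Set X)).Connected)
    (hiso : ∀ x : X, ∃ y, H.Adj x y)
    (htouch : ∀ u v, G.Adj u v →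
      ((↑(Ψ u) ∩ ↑(Ψ v) : Set X).Nonempty ∨ ∃ a ∈ Ψ u, ∃ b ∈ Ψ v, H.Adj a b))
    {σ' : X → Fin d → A} (hσ' : Satisfies H (reducedConstraint G C Ψ π) σ') :
    Satisfies G C (decode π c σ') := by
  intro u v huv
  rcases htouch u v huv with ⟨x, hxu, hxv⟩ | ⟨x, hxu, y, hyv, hxy⟩
  · obtain ⟨y, hxy⟩ := hiso x
    rw [decode_eq hc hconn hσ' hxu, decode_eq hc hconn hσ' hxv]
    exact (hσ' x y hxy).2.2.1 u v huv hxu hxv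
  · rw [decode_eq hc hconn hσ' hxu, decode_eq hc hconn hσ' hyv]
    exact (hσ' x y hxy).2.1 u v huv hxu hyv

theorem encode_decode (hc : ∀ v, c v ∈ Ψ v) (hconn : ∀ v, (H.induce (Ψ v : Set X)).Connected)
    (hρ : ∀ x (i : Fin d), i.val < (Vx Ψ x).card → x ∈ Ψ (ρ x i) ∧ π x (ρ x i) = i)
    {σ' : X → Fin d → A} (hσ' : Satisfies H (reducedConstraint G C Ψ π) σ')
    (hpad : IsPadded Ψ α σ') : encode Ψ ρ α (decode π c σ') = σ' := by
  funext x i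
  by_cases hi : i.val < (Vx Ψ x).card
  · obtain ⟨hx, hπρ⟩ := hρ x i hi
    rw [encode, if_pos hi, decode_eq hc hconn hσ' hx, hπρ]
  · rw [encode, if_neg hi, hpad x i (Nat.not_lt.mp hi)]

end CSPEmbedding

open CSPEmbedding in
theorem stmt_19_general {V X A : Type*} [Fintype V] [DecidableEq X]
    (G : SimpleGraph V) (H : SimpleGraph X)
    (C : V → V → Set (A × A))
    (Ψ : V → Finset X) (d : ℕ)
    (hiso : ∀ x : X, ∃ y, H.Adj x y)
    (hne : ∀ v, (Ψ v).Nonempty)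
    (hconn : ∀ v, (H.induce (Ψ v : Set X)).Connected)
    (htouch : ∀ u v, G.Adj u v →
      ((↑(Ψ u) ∩ ↑(Ψ v) : Set X).Nonempty ∨ ∃ a ∈ Ψ u, ∃ b ∈ Ψ v, H.Adj a b))
    (π : X → V → Fin d) (ρ : X → Fin d → V)
    (hπρ : ∀ x v, x ∈ Ψ v → ρ x (π x v) = v)
    (hπlt : ∀ x v, x ∈ Ψ v → (π x v).val < (Vx Ψ x).card)
    (hρ : ∀ x (i : Fin d), i.val < (Vx Ψ x).card → x ∈ Ψ (ρ x i) ∧ π x (ρ x i) = i)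
    (α : A) :
    Nonempty
      ({σ : V → A // ∀ u v, G.Adj u v → (σ u, σ v) ∈ C u v} ≃
        {σ' : X → Fin d → A //
          (∀ x y, H.Adj x y → Ctilde G C Ψ π x y (σ' x) (σ' y)) ∧
          (∀ x (i : Fin d), (Vx Ψ x).card ≤ i.val → σ' x i = α)}) := by
  choose c hc using hne
  exact ⟨{
    toFun := fun σ => ⟨encode Ψ ρ α σ.1, satisfies_encode hπρ hπlt σ.2, isPadded_encode σ.1⟩
    invFun := fun σ' => ⟨decode π c σ'.1, satisfies_decode hc hconn hiso htouch σ'.2.1⟩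
    left_inv := fun σ => Subtype.ext (decode_encode hc hπρ hπlt σ.1)
    right_inv := fun σ' => Subtype.ext (encode_decode hc hconn hρ σ'.2.1 σ'.2.2) }⟩

/-- There is a bijection between satisfying assignments of `Γ` and those satisfying
assignments of the reduced CSP `Φ` which are padded with the fixed symbol `α` on the
coordinates `d_x < i ≤ d` (here `H` is simple without isolated vertices and `Ψ` is a
connected embedding of `G` into `H` of depth at most `d`, with coordinate bijections
`π_x` and partial inverses `ρ_x`). -/
theorem stmt_19 {V X A : Type*} [Fintype V] [Fintype X] [DecidableEq V] [DecidableEq X]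
    (G : SimpleGraph V) (H : SimpleGraph X)
    (C : V → V → Set (A × A))
    (Ψ : V → Finset X) (d : ℕ)
    (hiso : ∀ x : X, ∃ y, H.Adj x y)
    (hne : ∀ v, (Ψ v).Nonempty)
    (hconn : ∀ v, (H.induce (Ψ v : Set X)).Connected)
    (htouch : ∀ u v, G.Adj u v →
      ((↑(Ψ u) ∩ ↑(Ψ v) : Set X).Nonempty ∨ ∃ a ∈ Ψ u, ∃ b ∈ Ψ v, H.Adj a b))
    (hdepth : ∀ x, (Vx Ψ x).card ≤ d)
    (π : X → V → Fin d) (ρ : X → Fin d → V)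
    (hπρ : ∀ x v, x ∈ Ψ v → ρ x (π x v) = v)
    (hπlt : ∀ x v, x ∈ Ψ v → (π x v).val < (Vx Ψ x).card)
    (hρ : ∀ x (i : Fin d), i.val < (Vx Ψ x).card → x ∈ Ψ (ρ x i) ∧ π x (ρ x i) = i)
    (α : A) :
    Nonempty
      ({σ : V → A // ∀ u v, G.Adj u v → (σ u, σ v) ∈ C u v} ≃
        {σ' : X → Fin d → A //
          (∀ x y, H.Adj x y → Ctilde G C Ψ π x y (σ' x) (σ' y)) ∧
          (∀ x (i : Fin d), (Vx Ψ x).card ≤ i.val → σ' x i = α)}) :=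
  stmt_19_general G H C Ψ d hiso hne hconn htouch π ρ hπρ hπlt hρ α
end
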